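/- The function p ↦ q(p) defined implicitly by H((p,1/2−p,1/2−p,p)) − 2H((q,1/2−q,1/2−q,q)) + log 4 = 0 for p ∈ (1/4, 1/2) is continuous and strictly increasing, and q(p) → 1/4 as p → 1/4⁺. -/

import Mathlib

noncomputable def Hsym (q : ℝ) : ℝ :=
  -(2 * (q * Real.log q) + 2 * ((1/2 - q) * Real.log (1/2 - q)))

lemma Hsym_continuous : Continuous Hsym := by
  have h0 : Continuous fun q : ℝ => q * Real.log q := Real.continuous_mul_log
  have h1 : Continuous fun q : ℝ => (1/2 - q) * Real.log (1/2 - q) :=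
    h0.comp (continuous_const.sub continuous_id)
  exact ((continuous_const.mul h0).add (continuous_const.mul h1)).neg

lemma Hsym_strictAnti : StrictAntiOn Hsym (Set.Icc (1/4 : ℝ) (1/2)) := by
  apply strictAntiOn_of_deriv_neg (convex_Icc _ _) Hsym_continuous.continuousOn
  intro x hx
  rw [interior_Icc] at hx
  obtain ⟨hx1, hx2⟩ := hx
  have hxne : x ≠ 0 := by positivity
  have hpos : (0:ℝ) < 1/2 - x := by linarith
  have h1 : HasDerivAt (fun q : ℝ => q * Real.log q) (Real.log x + 1) x :=
    Real.hasDerivAt_mul_log hxne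
  have hinner : HasDerivAt (fun q : ℝ => 1/2 - q) (-1) x := by
    simpa using (hasDerivAt_id' x).const_sub (1/2:ℝ)
  have h2 : HasDerivAt (fun q : ℝ => (1/2 - q) * Real.log (1/2 - q))
      ((Real.log (1/2 - x) + 1) * (-1)) x :=
    (Real.hasDerivAt_mul_log hpos.ne').comp x hinner
  have hd : HasDerivAt Hsym
      (-(2 * (Real.log x + 1) + 2 * ((Real.log (1/2 - x) + 1) * (-1)))) x :=
    ((h1.const_mul 2).add (h2.const_mul 2)).neg
  rw [hd.deriv]
  have hlog : Real.log (1/2 - x) < Real.log x := Real.log_lt_log hpos (by linarith)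
  linarith

lemma Hsym_lt {a b : ℝ} (ha : a ∈ Set.Icc (1/4 : ℝ) (1/2))
    (hb : b ∈ Set.Icc (1/4 : ℝ) (1/2)) (h : Hsym a < Hsym b) : b < a := by
  by_contra hc
  push_neg at hc
  rcases eq_or_lt_of_le hc with rfl | hlt
  · exact lt_irrefl _ h
  · exact absurd (Hsym_strictAnti ha hb hlt) (by linarith)

lemma Hsym_quarter : Hsym (1/4) = Real.log 4 := by
  have : Real.log (1/4 : ℝ) = -Real.log 4 := by
    rw [show (1/4:ℝ) = (4:ℝ)⁻¹ by norm_num, Real.log_inv]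
  unfold Hsym
  rw [show (1/2 - 1/4 : ℝ) = 1/4 by norm_num, this]
  ring

theorem stmt_7 (f : ℝ → ℝ)
    (hf : ∀ p ∈ Set.Ioo (1/4 : ℝ) (1/2),
      f p ∈ Set.Ioo (1/4 : ℝ) (1/2) ∧ Hsym p - 2 * Hsym (f p) + Real.log 4 = 0) :
    ContinuousOn f (Set.Ioo (1/4 : ℝ) (1/2)) ∧
    StrictMonoOn f (Set.Ioo (1/4 : ℝ) (1/2)) ∧
    Filter.Tendsto f (nhdsWithin (1/4) (Set.Ioi (1/4 : ℝ))) (nhds (1/4)) := by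
  have hIcc : Set.Ioo (1/4 : ℝ) (1/2) ⊆ Set.Icc (1/4 : ℝ) (1/2) := Set.Ioo_subset_Icc_self
  refine ⟨?_, ?_, ?_⟩
  · -- continuity
    intro x hx
    obtain ⟨hfx, heqx⟩ := hf x hx
    rw [ContinuousWithinAt]
    apply tendsto_order.2
    constructor
    · intro a ha
      set c := max a ((f x + 1/4)/2) with hcdef
      have hc1 : (1/4:ℝ) < c := lt_max_of_lt_right (by linarith [hfx.1])
      have hc2 : c < f x := max_lt (by linarith) (by linarith [hfx.1])
      have hcIcc : c ∈ Set.Icc (1/4:ℝ) (1/2) := ⟨hc1.le, by linarith [hfx.2]⟩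
      have hH : Hsym (f x) < Hsym c := Hsym_strictAnti hcIcc (hIcc hfx) hc2
      have hxlt : Hsym x < 2 * Hsym c - Real.log 4 := by linarith
      have hev : ∀ᶠ p in nhdsWithin x (Set.Ioo (1/4:ℝ) (1/2)),
          Hsym p < 2 * Hsym c - Real.log 4 :=
        ((Hsym_continuous.tendsto x).mono_left nhdsWithin_le_nhds).eventually
          (eventually_lt_nhds hxlt)
      filter_upwards [hev, self_mem_nhdsWithin] with p hp hpS
      obtain ⟨hfp, heqp⟩ := hf p hpS
      have : Hsym (f p) < Hsym c := by linarith
      have := Hsym_lt (hIcc hfp) hcIcc this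
      exact lt_of_le_of_lt (le_max_left _ _) this
    · intro b hb
      set c := min b ((f x + 1/2)/2) with hcdef
      have hc2 : f x < c := lt_min hb (by linarith [hfx.2])
      have hcIcc : c ∈ Set.Icc (1/4:ℝ) (1/2) :=
        ⟨by linarith [hfx.1], le_trans (min_le_right _ _) (by linarith [hfx.2])⟩
      have hH : Hsym c < Hsym (f x) := Hsym_strictAnti (hIcc hfx) hcIcc hc2
      have hxgt : 2 * Hsym c - Real.log 4 < Hsym x := by linarith
      have hev : ∀ᶠ p in nhdsWithin x (Set.Ioo (1/4:ℝ) (1/2)),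
          2 * Hsym c - Real.log 4 < Hsym p :=
        ((Hsym_continuous.tendsto x).mono_left nhdsWithin_le_nhds).eventually
          (eventually_gt_nhds hxgt)
      filter_upwards [hev, self_mem_nhdsWithin] with p hp hpS
      obtain ⟨hfp, heqp⟩ := hf p hpS
      have : Hsym c < Hsym (f p) := by linarith
      have := Hsym_lt hcIcc (hIcc hfp) this
      exact lt_of_lt_of_le this (min_le_left _ _)
  · -- strict mono
    intro p1 h1 p2 h2 h12
    obtain ⟨hq1, e1⟩ := hf p1 h1
    obtain ⟨hq2, e2⟩ := hf p2 h2
    have hH : Hsym p2 < Hsym p1 := Hsym_strictAnti (hIcc h1) (hIcc h2) h12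
    exact Hsym_lt (hIcc hq2) (hIcc hq1) (by linarith)
  · -- limit at 1/4
    apply tendsto_order.2
    constructor
    · intro a ha
      filter_upwards [Ioo_mem_nhdsGT (by norm_num : (1/4:ℝ) < 1/2)] with p hp
      exact lt_trans ha (hf p hp).1.1
    · intro b hb
      set c := min b (3/8 : ℝ) with hcdef
      have hc1 : (1/4:ℝ) < c := lt_min hb (by norm_num)
      have hcIcc : c ∈ Set.Icc (1/4:ℝ) (1/2) :=
        ⟨hc1.le, le_trans (min_le_right _ _) (by norm_num)⟩
      have hH : Hsym c < Real.log 4 := by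
        have := Hsym_strictAnti (by constructor <;> norm_num) hcIcc hc1
        rwa [Hsym_quarter] at this
      have hxgt : 2 * Hsym c - Real.log 4 < Hsym (1/4 : ℝ) := by
        rw [Hsym_quarter]; linarith
      have hev : ∀ᶠ p in nhdsWithin (1/4 : ℝ) (Set.Ioi (1/4:ℝ)),
          2 * Hsym c - Real.log 4 < Hsym p :=
        ((Hsym_continuous.tendsto _).mono_left nhdsWithin_le_nhds).eventually
          (eventually_gt_nhds hxgt)
      filter_upwards [hev, Ioo_mem_nhdsGT (by norm_num : (1/4:ℝ) < 1/2)] with p hp hpS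
      obtain ⟨hfp, heqp⟩ := hf p hpS
      have : Hsym c < Hsym (f p) := by linarith
      exact lt_of_lt_of_le (Hsym_lt hcIcc (hIcc hfp) this) (min_le_left _ _)
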